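/- Let μ be a Λ-bounded premeasure that is Λ-absolutely continuous, witnessed by premeasures {μₙ} with supₙ‖μₙ‖⁺_Λ < ∞ and sup_I |(μ+μₙ)(I)| → 0. Then the Λ-singular part of μ vanishes: for every Λ-Carleson set F, μ_s(F) = −Σ_k μ(I_k) = 0, where {I_k} are the complementary arcs of F. -/

import Mathlib

open MeasureTheory Filter Metric Set
open scoped Topology ENNReal

noncomputable section

instance : Fact ((0:ℝ) < 1) := ⟨one_pos⟩

/-- The circle of circumference 1. -/
abbrev Circle1 := AddCircle (1 : ℝ)

/-- Arcs (possibly half-open, possibly empty) of the circle. -/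
def IsArc (S : Set Circle1) : Prop :=
  ∃ a l : ℝ, 0 ≤ l ∧ l ≤ 1 ∧ S = (fun x : ℝ => (x : Circle1)) '' Set.Ico a (a + l)

/-- Normalized length of a subset of the circle. -/
def arcLen (S : Set Circle1) : ℝ := (volume S).toReal

/-- A premeasure on the circle: finitely additive on arcs, total mass zero,
continuous on nested sequences of arcs with empty intersection. -/
structure Premeasure where
  m : Set Circle1 → ℝ
  empty : m ∅ = 0
  total : m Set.univ = 0
  union : ∀ S T : Set Circle1, Disjoint S T → IsArc T → m (S ∪ T) = m S + m T
  cont : ∀ I : ℕ → Set Circle1, (∀ n, IsArc (I n)) → (∀ n, I (n + 1) ⊆ I n) →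
    (⋂ n, I n) = ∅ → Tendsto (fun n => m (I n)) atTop (𝓝 0)

/-- `μ(I) ≤ C |I| Λ(|I|)` for every arc `I`. -/
def LambdaBounded (Λ : ℝ → ℝ) (μ : Premeasure) (C : ℝ) : Prop :=
  ∀ S : Set Circle1, IsArc S → μ.m S ≤ C * arcLen S * Λ (arcLen S)

/-- Majorant hypotheses on `Λ`. -/
def Majorant (Λ : ℝ → ℝ) : Prop :=
  (∀ t ∈ Set.Ioc (0:ℝ) 1, 0 < Λ t) ∧ AntitoneOn Λ (Set.Ioc 0 1) ∧
  MonotoneOn (fun t => t * Λ t) (Set.Ioc 0 1) ∧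
  Tendsto (fun t => t * Λ t) (𝓝[>] 0) (𝓝 0) ∧
  Tendsto Λ (𝓝[>] 0) atTop

/-!
Write `aₖ = |Iₖ| Λ(|Iₖ|)`. Let `ρ` be a premeasure with `ρ(I) ≤ K |I| Λ(|I|)`, `K ≥ 0`.
Removing `I₀, …, I_{N-1}` from the circle one arc at a time, each removal splits one gap `J` into
two arcs, and every other `Iₖ` still lies inside a single gap. Since `F` is null, a gap `J` is,
up to a null set, the disjoint union of the `Iₖ` it contains, so antitonicity of `Λ` gives
`|J| Λ(|J|) ≤ ∑_{Iₖ ⊆ J} aₖ`. Summing over the gaps,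
`-∑_{k<N} ρ(Iₖ) = ρ(𝕋 \ ⋃_{k<N} Iₖ) ≤ K ∑_{k≥N} aₖ`.
For `ρ = μ` this bounds the partial sums of `∑ μ(Iₖ)` from below by minus a vanishing tail; for
`ρ = νₙ`, whose values on arcs converge to those of `-μ`, it bounds them from above by the same
tail.
-/

def arc (a l : ℝ) : Set Circle1 := ((↑) : ℝ → Circle1) '' Ico a (a + l)

lemma isArc_arc {a l : ℝ} (h0 : 0 ≤ l) (h1 : l ≤ 1) : IsArc (arc a l) := ⟨a, l, h0, h1, rfl⟩

lemma IsArc.exists_eq_arc {S : Set Circle1} (hS : IsArc S) :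
    ∃ a l, 0 ≤ l ∧ l ≤ 1 ∧ S = arc a l := hS

lemma arc_one (a : ℝ) : arc a 1 = univ := AddCircle.coe_image_Ico_eq 1 a

lemma arc_of_nonpos (a : ℝ) {l : ℝ} (hl : l ≤ 0) : arc a l = ∅ := by
  simp [arc, Ico_eq_empty_of_le (by linarith : a + l ≤ a)]

lemma arc_add_int (a l : ℝ) (n : ℤ) : arc (a + n) l = arc a l := by
  rw [arc, show a + n + l = a + l + n by ring, ← image_add_const_Ico, image_image]
  simp [arc]

lemma exists_arc_eq_of_mem_Ico (a l b : ℝ) : ∃ a' ∈ Ico b (b + 1), arc a' l = arc a l := by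
  refine ⟨a + (-⌊a - b⌋ : ℤ), ⟨?_, ?_⟩, arc_add_int a l _⟩ <;>
    push_cast <;> linarith [Int.floor_le (a - b), Int.lt_floor_add_one (a - b)]

lemma coe_mem_arc_iff {b s x : ℝ} (hs : s ≤ 1) (hx : x ∈ Ico b (b + 1)) :
    (x : Circle1) ∈ arc b s ↔ x < b + s := by
  refine ⟨fun ⟨y, hy, hyx⟩ => ?_, fun h => ⟨x, ⟨hx.1, h⟩, rfl⟩⟩
  have hy' : y ∈ Ico b (b + 1) := ⟨hy.1, by linarith [hy.2]⟩
  rw [← (AddCircle.coe_eq_coe_iff_of_mem_Ico hy' hx).1 hyx]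
  exact hy.2

lemma arc_union {a l m : ℝ} (hl : 0 ≤ l) (hm : 0 ≤ m) :
    arc a (l + m) = arc a l ∪ arc (a + l) m := by
  rw [arc, arc, arc, ← image_union, Ico_union_Ico_eq_Ico (by linarith) (by linarith), add_assoc]

lemma arc_disjoint {a l b m : ℝ} (hab : a + l ≤ b) (hba : b + m ≤ a + 1) :
    Disjoint (arc a l) (arc b m) := by
  rw [disjoint_right]
  rintro _ ⟨y, hy, rfl⟩ hya
  obtain ⟨z, hz, -⟩ := id hya
  have hl : l ≤ 1 := by linarith [hy.1, hy.2, hz.1, hz.2]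
  have := (coe_mem_arc_iff hl ⟨by linarith [hy.1, hz.1, hz.2], by linarith [hy.2]⟩).1 hya
  linarith [hy.1]

lemma arc_compl {a l : ℝ} (h0 : 0 ≤ l) (h1 : l ≤ 1) : (arc a l)ᶜ = arc (a + l) (1 - l) := by
  refine (IsCompl.of_eq ?_ ?_).compl_eq
  · exact (arc_disjoint le_rfl (by linarith)).eq_bot
  · change arc a l ∪ _ = univ
    rw [← arc_union h0 (by linarith), add_sub_cancel, arc_one]

lemma exists_arc_eq_of_subset {a l b s : ℝ} (hl : 0 < l) (hs : s < 1)
    (h : arc a l ⊆ arc b s) : ∃ a', arc a' l = arc a l ∧ b ≤ a' ∧ a' + l ≤ b + s := by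
  obtain ⟨a', ha', harc⟩ := exists_arc_eq_of_mem_Ico a l b
  rw [← harc] at h ⊢
  have hstart : a' < b + s :=
    (coe_mem_arc_iff hs.le ha').1 (h ⟨a', ⟨le_rfl, by linarith⟩, rfl⟩)
  refine ⟨a', rfl, ha'.1, not_lt.1 fun hlt => ?_⟩
  have hend := h ⟨b + s, ⟨hstart.le, hlt⟩, rfl⟩
  rw [coe_mem_arc_iff hs.le ⟨by linarith [ha'.1], by linarith⟩] at hend
  exact lt_irrefl _ hend

lemma arc_subset_or_subset_of_disjoint {a l b s c m : ℝ} (hl : 0 < l) (hm : 0 < m)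
    (hba : b ≤ a) (has : a + l ≤ b + s) (hd : Disjoint (arc a l) (arc c m)) :
    arc a l ⊆ arc b (c - b) ∨ arc a l ⊆ arc (c + m) (b + s - (c + m)) := by
  rcases lt_or_ge a c with hac | hca
  · refine Or.inl (image_mono (Ico_subset_Ico hba (not_lt.1 fun hlt => ?_)))
    exact disjoint_left.1 hd ⟨c, ⟨hac.le, by linarith⟩, rfl⟩ ⟨c, ⟨le_rfl, by linarith⟩, rfl⟩
  · refine Or.inr (image_mono (Ico_subset_Ico (not_lt.1 fun hlt => ?_) (by linarith)))
    exact disjoint_left.1 hd ⟨a, ⟨le_rfl, by linarith⟩, rfl⟩ ⟨a, ⟨hca, hlt⟩, rfl⟩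

lemma IsArc.measurableSet {S : Set Circle1} (hS : IsArc S) : MeasurableSet S := by
  obtain ⟨a, l, -, hl, rfl⟩ := hS
  refine measurableSet_Ico.image_of_continuousOn_injOn
    (AddCircle.continuous_mk' 1).continuousOn fun x hx y hy hxy => ?_
  exact (AddCircle.coe_eq_coe_iff_of_mem_Ico (a := a) ⟨hx.1, by linarith [hx.2]⟩
    ⟨hy.1, by linarith [hy.2]⟩).1 hxy

lemma IsArc.exists_split {J T : Set Circle1} (hJ : IsArc J) (hT : IsArc T) (hTJ : T ⊆ J)
    (hT0 : T.Nonempty) :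
    ∃ L R, IsArc L ∧ IsArc R ∧ J = L ∪ T ∪ R ∧ Disjoint L T ∧ Disjoint T R ∧ Disjoint L R ∧
      ∀ A, IsArc A → A ⊆ J → Disjoint A T → A ⊆ L ∨ A ⊆ R := by
  obtain ⟨c, m, hm0, hm1, rfl⟩ := hT.exists_eq_arc
  have hm : 0 < m := not_le.1 fun h => hT0.ne_empty (arc_of_nonpos c h)
  by_cases hJu : J = univ
  · refine ⟨∅, arc (c + m) (1 - m), ⟨c, 0, le_rfl, zero_le_one, (arc_of_nonpos c le_rfl).symm⟩,
      isArc_arc (by linarith) (by linarith), ?_, empty_disjoint _, ?_, empty_disjoint _,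
      fun A _ _ hA => Or.inr ?_⟩ <;> rw [← arc_compl hm0 hm1]
    · rw [hJu, empty_union, union_compl_self]
    · exact disjoint_compl_right
    · exact hA.subset_compl_right
  obtain ⟨b, s, hs0, hs1, rfl⟩ := hJ.exists_eq_arc
  have hs : s < 1 := lt_of_le_of_ne hs1 fun h => hJu (h ▸ arc_one b)
  obtain ⟨c', hc', hbc, hcs⟩ := exists_arc_eq_of_subset hm hs hTJ
  rw [← hc']
  refine ⟨arc b (c' - b), arc (c' + m) (b + s - (c' + m)), isArc_arc (by linarith) (by linarith),
    isArc_arc (by linarith) (by linarith), ?_, arc_disjoint (by linarith) (by linarith),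
    arc_disjoint le_rfl (by linarith), arc_disjoint (by linarith) (by linarith), ?_⟩
  · conv_lhs => rw [show s = c' - b + m + (b + s - (c' + m)) by ring]
    rw [arc_union (by linarith) (by linarith), arc_union (by linarith) hm.le,
      show b + (c' - b) = c' by ring, show b + (c' - b + m) = c' + m by ring]
  · rintro A hA hAJ hAT
    obtain ⟨a, l, -, -, rfl⟩ := hA.exists_eq_arc
    rcases le_or_gt l 0 with hl | hl
    · exact Or.inl ((arc_of_nonpos a hl).symm ▸ empty_subset _)
    obtain ⟨a', ha', hba, has⟩ := exists_arc_eq_of_subset hl hs hAJ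
    rw [← ha'] at hAT ⊢
    exact arc_subset_or_subset_of_disjoint hl hm hba has hAT

def arcEntropy (Λ : ℝ → ℝ) (S : Set Circle1) : ℝ := arcLen S * Λ (arcLen S)

lemma arcLen_mono {S T : Set Circle1} (h : S ⊆ T) : arcLen S ≤ arcLen T :=
  ENNReal.toReal_mono (measure_ne_top _ _) (measure_mono h)

lemma arcLen_le_one (S : Set Circle1) : arcLen S ≤ 1 := by
  simpa [arcLen, AddCircle.measure_univ] using arcLen_mono (subset_univ S)

lemma arcLen_nonneg (S : Set Circle1) : 0 ≤ arcLen S := ENNReal.toReal_nonneg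

lemma arcEntropy_empty (Λ : ℝ → ℝ) : arcEntropy Λ ∅ = 0 := by simp [arcEntropy, arcLen]

lemma arcEntropy_nonneg {Λ : ℝ → ℝ} (hΛ : ∀ t ∈ Ioc (0 : ℝ) 1, 0 < Λ t) (S : Set Circle1) :
    0 ≤ arcEntropy Λ S := by
  rcases (arcLen_nonneg S).eq_or_lt with h | h
  · rw [arcEntropy, ← h, zero_mul]
  · exact (mul_pos h (hΛ _ ⟨h, arcLen_le_one S⟩)).le

lemma arcLen_mul_le_arcEntropy_of_subset {Λ : ℝ → ℝ} (hΛ : AntitoneOn Λ (Ioc 0 1))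
    {S T : Set Circle1} (h : S ⊆ T) : arcLen S * Λ (arcLen T) ≤ arcEntropy Λ S := by
  rcases (arcLen_nonneg S).eq_or_lt with h0 | h0
  · rw [arcEntropy, ← h0, zero_mul, zero_mul]
  · exact mul_le_mul_of_nonneg_left (hΛ ⟨h0, arcLen_le_one S⟩
      ⟨h0.trans_le (arcLen_mono h), arcLen_le_one T⟩ (arcLen_mono h)) h0.le

lemma LambdaBounded.le_mul_arcEntropy {Λ : ℝ → ℝ} {ρ : Premeasure} {K : ℝ}
    (h : LambdaBounded Λ ρ K) {S : Set Circle1} (hS : IsArc S) :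
    ρ.m S ≤ K * arcEntropy Λ S :=
  (h S hS).trans_eq (mul_assoc _ _ _)

lemma LambdaBounded.mono {Λ : ℝ → ℝ} (hΛ : ∀ t ∈ Ioc (0 : ℝ) 1, 0 < Λ t) {ρ : Premeasure}
    {C K : ℝ} (h : LambdaBounded Λ ρ C) (hCK : C ≤ K) : LambdaBounded Λ ρ K := fun S hS => by
  have := (h.le_mul_arcEntropy hS).trans (mul_le_mul_of_nonneg_right hCK (arcEntropy_nonneg hΛ S))
  rwa [arcEntropy, ← mul_assoc] at this

section CarlesonSet

variable {Λ : ℝ → ℝ} {F : Set Circle1} {I : ℕ → Set Circle1}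

lemma arcEntropy_le_tsum_indicator (hΛ : AntitoneOn Λ (Ioc 0 1)) (hF0 : volume F = 0)
    (hI : ∀ k, MeasurableSet (I k)) (hdisj : Pairwise (Function.onFun Disjoint I))
    (hcomp : Fᶜ = ⋃ k, I k)
    (hent : Summable fun k => arcEntropy Λ (I k)) {J : Set Circle1}
    (hJ : ∀ k, I k ⊆ J ∨ Disjoint (I k) J) :
    arcEntropy Λ J ≤ ∑' k, {k | I k ⊆ J}.indicator (fun k => arcEntropy Λ (I k)) k := by
  have hpiece : ∀ k, MeasurableSet (J ∩ I k) ∧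
      (volume (J ∩ I k)).toReal = {k | I k ⊆ J}.indicator (fun k => arcLen (I k)) k := by
    intro k
    by_cases h : I k ⊆ J
    · rw [inter_eq_right.2 h, indicator_of_mem (show k ∈ {k | I k ⊆ J} from h)]
      exact ⟨hI k, rfl⟩
    · rw [((hJ k).resolve_left h).symm.inter_eq,
        indicator_of_notMem (show k ∉ {k | I k ⊆ J} from h)]
      simp
  have hvol : volume J = ∑' k, volume (J ∩ I k) := by
    rw [← measure_sdiff_null hF0, sdiff_eq, hcomp, inter_iUnion, measure_iUnion
      (fun i j hij => (hdisj hij).mono inter_subset_right inter_subset_right) fun k => (hpiece k).1]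
  have hlen : HasSum (fun k => {k | I k ⊆ J}.indicator (fun k => arcLen (I k)) k) (arcLen J) := by
    have := ENNReal.hasSum_toReal (hvol ▸ measure_ne_top _ _ : ∑' k, volume (J ∩ I k) ≠ ⊤)
    rwa [← ENNReal.tsum_toReal_eq fun _ => measure_ne_top _ _, ← hvol, funext fun k => (hpiece k).2]
      at this
  refine hasSum_le (fun k => ?_) (hlen.mul_right (Λ (arcLen J))) (hent.indicator _).hasSum
  by_cases h : I k ⊆ J
  · simpa [indicator_apply, h] using arcLen_mul_le_arcEntropy_of_subset hΛ h
  · simp [h]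

lemma indicator_eq_of_split {J L R : Set Circle1} {k : ℕ} (hk : (I k).Nonempty)
    (hJ : J = L ∪ I k ∪ R) (hLk : Disjoint L (I k)) (hkR : Disjoint (I k) R)
    (hLR : Disjoint L R) (hsplit : ∀ j ≠ k, I j ⊆ J → I j ⊆ L ∨ I j ⊆ R)
    {g : ℕ → ℝ} (hg : ∀ j, I j = ∅ → g j = 0) :
    {j | I j ⊆ J}.indicator g =
      {j | I j ⊆ L}.indicator g + {j | I j ⊆ R}.indicator g + Pi.single k (g k) := by
  have hLJ : L ⊆ J := hJ ▸ subset_union_left.trans subset_union_left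
  have hRJ : R ⊆ J := hJ ▸ subset_union_right
  ext j
  simp only [Pi.add_apply]
  rcases eq_or_ne j k with rfl | hjk
  · have hkJ : I j ⊆ J := hJ ▸ subset_union_right.trans subset_union_left
    have hkL : ¬I j ⊆ L := fun h => hk.ne_empty (disjoint_self.1 (hLk.mono_left h))
    have hkR' : ¬I j ⊆ R := fun h => hk.ne_empty (disjoint_self.1 (hkR.mono_right h))
    simp [hkJ, hkL, hkR']
  rw [Pi.single_eq_of_ne hjk, add_zero]
  rcases (I j).eq_empty_or_nonempty with he | hne
  · have h0 (S : Set ℕ) : S.indicator g j = 0 := indicator_apply_eq_zero.2 fun _ => hg j he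
    rw [h0, h0, h0, add_zero]
  have hnot : ¬(I j ⊆ L ∧ I j ⊆ R) := fun h => hne.ne_empty (disjoint_self.1 (hLR.mono h.1 h.2))
  by_cases hjJ : I j ⊆ J
  · rcases hsplit j hjk hjJ with h | h <;> simp_all
  · have hjL : ¬I j ⊆ L := fun h => hjJ (h.trans hLJ)
    have hjR : ¬I j ⊆ R := fun h => hjJ (h.trans hRJ)
    simp [hjJ, hjL, hjR]

lemma subset_or_disjoint_of_split {J A B : Set Circle1} {k : ℕ}
    (hJ : ∀ j, I j ⊆ J ∨ Disjoint (I j) J) (hAJ : A ⊆ J) (hAk : Disjoint A (I k))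
    (hAB : Disjoint A B) (hsplit : ∀ j ≠ k, I j ⊆ J → I j ⊆ A ∨ I j ⊆ B) (j : ℕ) :
    I j ⊆ A ∨ Disjoint (I j) A := by
  rcases hJ j with h | h
  · rcases eq_or_ne j k with rfl | hjk
    · exact Or.inr hAk.symm
    · exact (hsplit j hjk h).imp_right fun h' => hAB.symm.mono_left h'
  · exact Or.inr (h.mono_right hAJ)

/-- Equivalently, `ρ (J \ ⋃ k ∈ s, I k) ≤ K * ∑ {aₖ | k ∉ s, I k ⊆ J}` with
`aₖ = arcEntropy Λ (I k)`; this form avoids the set difference, which is not an arc. -/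
lemma le_sum_indicator_add_tsum_indicator {ρ : Premeasure} {K : ℝ}
    (hΛ : AntitoneOn Λ (Ioc 0 1)) (hF0 : volume F = 0) (hI : ∀ k, IsArc (I k))
    (hdisj : Pairwise (Function.onFun Disjoint I)) (hcomp : Fᶜ = ⋃ k, I k)
    (hent : Summable fun k => arcEntropy Λ (I k)) (hK : 0 ≤ K) (hρ : LambdaBounded Λ ρ K)
    (s : Finset ℕ) {J : Set Circle1} (hJa : IsArc J) (hJ : ∀ k, I k ⊆ J ∨ Disjoint (I k) J) :
    ρ.m J ≤ ∑ k ∈ s, {k | I k ⊆ J}.indicator (fun k => ρ.m (I k) - K * arcEntropy Λ (I k)) k +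
      K * ∑' k, {k | I k ⊆ J}.indicator (fun k => arcEntropy Λ (I k)) k := by
  induction s using Finset.induction_on generalizing J with
  | empty =>
    simpa using (hρ.le_mul_arcEntropy hJa).trans (mul_le_mul_of_nonneg_left
      (arcEntropy_le_tsum_indicator hΛ hF0 (fun k => (hI k).measurableSet) hdisj hcomp hent hJ) hK)
  | insert k s hks ih =>
    rw [Finset.sum_insert hks]
    by_cases hkJ : I k ⊆ J ∧ (I k).Nonempty
    swap
    · suffices {k | I k ⊆ J}.indicator (fun k => ρ.m (I k) - K * arcEntropy Λ (I k)) k = 0 by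
        rw [this, zero_add]
        exact ih hJa hJ
      by_cases h : I k ⊆ J
      · rw [indicator_of_mem (show k ∈ {k | I k ⊆ J} from h),
          not_nonempty_iff_eq_empty.1 fun hne => hkJ ⟨h, hne⟩, ρ.empty, arcEntropy_empty]
        ring
      · exact indicator_of_notMem (show k ∉ {k | I k ⊆ J} from h) _
    obtain ⟨L, R, hL, hR, hJLR, hLk, hkR, hLR, hsplit⟩ := hJa.exists_split (hI k) hkJ.1 hkJ.2
    have hside : ∀ j ≠ k, I j ⊆ J → I j ⊆ L ∨ I j ⊆ R :=
      fun j hj h => hsplit _ (hI j) h (hdisj hj)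
    have hLJ : L ⊆ J := hJLR ▸ subset_union_left.trans subset_union_left
    have hRJ : R ⊆ J := hJLR ▸ subset_union_right
    have ihL := ih hL (subset_or_disjoint_of_split hJ hLJ hLk hLR hside)
    have ihR := ih hR (subset_or_disjoint_of_split hJ hRJ hkR.symm hLR.symm
      fun j hj h => (hside j hj h).symm)
    have hρJ : ρ.m J = ρ.m L + ρ.m (I k) + ρ.m R := by
      rw [hJLR, ρ.union _ _ (disjoint_union_left.2 ⟨hLR, hkR⟩) hR, ρ.union _ _ hLk (hI k)]
    rw [hρJ, indicator_of_mem (show k ∈ {k | I k ⊆ J} from hkJ.1),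
      indicator_eq_of_split hkJ.2 hJLR hLk hkR hLR hside fun j hj => by
        rw [hj, ρ.empty, arcEntropy_empty, mul_zero, sub_zero],
      indicator_eq_of_split hkJ.2 hJLR hLk hkR hLR hside fun j hj => by
        rw [hj, arcEntropy_empty]]
    simp only [Pi.add_apply, Finset.sum_add_distrib, Finset.sum_pi_single', if_neg hks]
    rw [((hent.indicator _).add (hent.indicator _)).tsum_add (hasSum_pi_single k _).summable,
      (hent.indicator _).tsum_add (hent.indicator _), tsum_pi_single]
    linarith

lemma neg_sum_range_le_mul_tsum {ρ : Premeasure} {K : ℝ}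
    (hΛ : AntitoneOn Λ (Ioc 0 1)) (hF0 : volume F = 0) (hI : ∀ k, IsArc (I k))
    (hdisj : Pairwise (Function.onFun Disjoint I)) (hcomp : Fᶜ = ⋃ k, I k)
    (hent : Summable fun k => arcEntropy Λ (I k)) (hK : 0 ≤ K) (hρ : LambdaBounded Λ ρ K)
    (N : ℕ) : -∑ k ∈ Finset.range N, ρ.m (I k) ≤ K * ∑' k, arcEntropy Λ (I (k + N)) := by
  have := le_sum_indicator_add_tsum_indicator hΛ hF0 hI hdisj hcomp hent hK hρ
    (Finset.range N) ⟨0, 1, zero_le_one, le_rfl, (arc_one 0).symm⟩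
    fun k => Or.inl (subset_univ (I k))
  simp only [subset_univ, ofPred_true, indicator_univ] at this
  rw [ρ.total, Finset.sum_sub_distrib, ← Finset.mul_sum, ← hent.sum_add_tsum_nat_add N] at this
  linarith

end CarlesonSet

lemma tendsto_neg_of_abs_add_le {μ : Premeasure} {ν : ℕ → Premeasure}
    (hconv : ∀ ε > (0 : ℝ), ∃ N, ∀ n ≥ N, ∀ S : Set Circle1, IsArc S → |μ.m S + (ν n).m S| ≤ ε)
    {S : Set Circle1} (hS : IsArc S) : Tendsto (fun n => (ν n).m S) atTop (𝓝 (-μ.m S)) := by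
  refine Metric.tendsto_atTop.2 fun ε hε => ?_
  obtain ⟨N, hN⟩ := hconv (ε / 2) (half_pos hε)
  refine ⟨N, fun n hn => ?_⟩
  rw [Real.dist_eq, sub_neg_eq_add, add_comm]
  exact (hN n hn S hS).trans_lt (half_lt_self hε)

theorem stmt19_general (Λ : ℝ → ℝ) (hΛ : Majorant Λ) (μ : Premeasure) (C : ℝ)
    (hμ : LambdaBounded Λ μ C)
    (ν : ℕ → Premeasure) (M : ℝ) (hν : ∀ n, LambdaBounded Λ (ν n) M)
    (hconv : ∀ ε > (0:ℝ), ∃ N, ∀ n ≥ N, ∀ S : Set Circle1, IsArc S →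
      |μ.m S + (ν n).m S| ≤ ε)
    (F : Set Circle1) (hF0 : volume F = 0)
    (I : ℕ → Set Circle1) (hI : ∀ k, IsArc (I k))
    (hdisj : Pairwise (Function.onFun Disjoint I))
    (hcomp : Fᶜ = ⋃ k, I k)
    (hent : Summable fun k => arcLen (I k) * Λ (arcLen (I k))) :
    HasSum (fun k => μ.m (I k)) 0 := by
  set K := max (max C M) 0
  have hK : 0 ≤ K := le_max_right _ _
  have hμK : LambdaBounded Λ μ K := hμ.mono hΛ.1 ((le_max_left C M).trans (le_max_left _ _))
  have hνK (n : ℕ) : LambdaBounded Λ (ν n) K :=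
    (hν n).mono hΛ.1 ((le_max_right C M).trans (le_max_left _ _))
  have hlim (k : ℕ) := tendsto_neg_of_abs_add_le hconv (hI k)
  have hsum : Summable fun k => μ.m (I k) :=
    .of_norm_bounded (hent.mul_left K) fun k => abs_le.2 ⟨neg_le.1 (le_of_tendsto' (hlim k)
      fun n => (hνK n).le_mul_arcEntropy (hI k)), hμK.le_mul_arcEntropy (hI k)⟩
  have key {ρ : Premeasure} (hρ : LambdaBounded Λ ρ K) :=
    neg_sum_range_le_mul_tsum hΛ.2.1 hF0 hI hdisj hcomp hent hK hρ
  have htail : Tendsto (fun N => K * ∑' k, arcEntropy Λ (I (k + N))) atTop (𝓝 0) := by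
    simpa using (tendsto_sum_nat_add fun k => arcEntropy Λ (I k)).const_mul K
  rw [hsum.hasSum_iff_tendsto_nat]
  refine squeeze_zero_norm (fun N => abs_le.2 ⟨neg_le.1 (key hμK N), ?_⟩) htail
  have := ge_of_tendsto' (tendsto_finsetSum _ fun k _ => hlim k) fun n => neg_le.1 (key (hνK n) N)
  rwa [Finset.sum_neg_distrib, le_neg, neg_neg] at this

/-- If a `Λ`-bounded premeasure `μ` is `Λ`-absolutely continuous — witnessed by
premeasures `νₙ` with `supₙ ‖νₙ‖⁺_Λ < ∞` and `sup_I |(μ+νₙ)(I)| → 0` — then the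
`Λ`-singular part of `μ` vanishes: for every `Λ`-Carleson set `F` with
complementary arcs `Iₖ`, `μ_s(F) = −Σₖ μ(Iₖ) = 0`. -/
theorem stmt19 (Λ : ℝ → ℝ) (hΛ : Majorant Λ) (μ : Premeasure) (C : ℝ)
    (hμ : LambdaBounded Λ μ C)
    (ν : ℕ → Premeasure) (M : ℝ) (hν : ∀ n, LambdaBounded Λ (ν n) M)
    (hconv : ∀ ε > (0:ℝ), ∃ N, ∀ n ≥ N, ∀ S : Set Circle1, IsArc S →
      |μ.m S + (ν n).m S| ≤ ε)
    (F : Set Circle1) (hF : IsClosed F) (hFne : F.Nonempty) (hF0 : volume F = 0)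
    (I : ℕ → Set Circle1) (hI : ∀ k, IsArc (I k))
    (hdisj : Pairwise (Function.onFun Disjoint I))
    (hcomp : Fᶜ = ⋃ k, I k)
    (hent : Summable fun k => arcLen (I k) * Λ (arcLen (I k))) :
    HasSum (fun k => μ.m (I k)) 0 :=
  stmt19_general Λ hΛ μ C hμ ν M hν hconv F hF0 I hI hdisj hcomp hent
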